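/- arXiv:1901.03059 — 4 statements merged into one kernel-verified Lean document; each statement's English description precedes it below -/
import Mathlib

section
/- Let P be a d × n matrix of indeterminates over a field K, partitioned columnwise into blocks C_1, …, C_ℓ with pairwise disjoint column sets. The ideal generated by a set of variables p_{i,j} (for j in a fixed set S of column indices) together with all 2-minors of the submatrices P_{C_j \ S} is a prime ideal of K[P]. -/
/-!
With target variables `y_{b,i}` (block `b`, row `i`) and `z_j` (column `j`), the ideal is the
kernel of the monomial map sending `p_{i,j}` to `0` for `j ∈ S` and to `y_{b,i} z_j` for `j` in
block `b`, columns outside every block forming blocks of their own. The target is a polynomial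
ring over a domain, so the kernel is prime.

The kernel of such a map is spanned by the monomials it kills and by the binomials `m - m'` with
`m, m'` of equal nonzero image. Such `m` and `m'` have the same row sums on each block and the
same column sums, so one exchange along a `2`-minor turns `m` into a monomial sharing a variable
with `m'`; cancelling that variable, induction on the degree of `m'` finishes.
-/

open MvPolynomial Function

namespace MvPolynomial

variable {σ R : Type*} [CommRing R]

theorem ker_le_of_map_monomial {τ : Type*} (φ : MvPolynomial σ R →ₐ[R] MvPolynomial τ R)
    {I : Ideal (MvPolynomial σ R)}
    (hφ : ∀ m, φ (monomial m 1) = 0 ∨ ∃ y, φ (monomial m 1) = monomial y 1)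
    (hzero : ∀ m, φ (monomial m 1) = 0 → monomial m 1 ∈ I)
    (hfib : ∀ m m', φ (monomial m 1) ≠ 0 → φ (monomial m 1) = φ (monomial m' 1) →
      monomial m 1 - monomial m' 1 ∈ I) :
    RingHom.ker φ ≤ I := by
  classical
  let q := Ideal.Quotient.mkₐ R I
  -- The quotient map factors through `φ`: send `monomial y 1` to the class of any monomial over it.
  let s := (basisMonomials τ R).constr R fun y =>
    if h : ∃ m, φ (monomial m 1) = monomial y 1 then q (monomial h.choose 1) else 0
  have hfactor : q.toLinearMap = s ∘ₗ φ.toLinearMap := by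
    refine (basisMonomials σ R).ext fun m => ?_
    simp only [coe_basisMonomials, LinearMap.comp_apply, AlgHom.toLinearMap_apply]
    by_cases h0 : φ (monomial m 1) = 0
    · rw [h0, map_zero]
      exact Ideal.Quotient.eq_zero_iff_mem.2 (hzero m h0)
    obtain ⟨y, hy⟩ := (hφ m).resolve_left h0
    have hex : ∃ m', φ (monomial m' 1) = monomial y 1 := ⟨m, hy⟩
    rw [hy, show monomial y (1 : R) = basisMonomials τ R y from rfl, Module.Basis.constr_basis,
      dif_pos hex]
    exact Ideal.Quotient.eq.2 (hfib m _ h0 (hy.trans hex.choose_spec.symm))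
  intro f hf
  rw [← Ideal.Quotient.eq_zero_iff_mem]
  exact (LinearMap.congr_fun hfactor f).trans (by simp [(RingHom.mem_ker).1 hf])

theorem monomial_sub_monomial_mem_of_exchange {A F : Type*} [CommRing A] [IsDomain A]
    [FunLike F (MvPolynomial σ R) A] [RingHomClass F (MvPolynomial σ R) A] (φ : F)
    {I : Ideal (MvPolynomial σ R)} (hI : I ≤ RingHom.ker φ)
    (hmove : ∀ m m', φ (monomial m 1) ≠ 0 → φ (monomial m 1) = φ (monomial m' 1) → m ≠ 0 →
      ∃ m₂, monomial m 1 - monomial m₂ 1 ∈ I ∧ ∃ v, 0 < m₂ v ∧ 0 < m' v)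
    {m m' : σ →₀ ℕ} (hne : φ (monomial m 1) ≠ 0) (heq : φ (monomial m 1) = φ (monomial m' 1)) :
    monomial m 1 - monomial m' 1 ∈ I := by
  obtain ⟨N, hN⟩ : ∃ N, m'.degree = N := ⟨_, rfl⟩
  induction N generalizing m m' with
  | zero =>
    obtain rfl := (Finsupp.degree_eq_zero_iff m').1 hN
    by_cases hm : m = 0
    · simp [hm]
    obtain ⟨-, -, v, -, hv⟩ := hmove m 0 hne heq hm
    simp at hv
  | succ N ih =>
    by_cases hm : m = 0
    · have hm' : m' ≠ 0 := by rintro rfl; simp at hN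
      obtain ⟨-, -, v, -, hv⟩ := hmove m' m (heq ▸ hne) heq.symm hm'
      simp [hm] at hv
    obtain ⟨m₂, hm₂, v, hv₂, hv'⟩ := hmove m m' hne heq hm
    obtain ⟨r, rfl⟩ := exists_add_of_le (Finsupp.single_le_iff.2 (Nat.one_le_of_lt hv₂))
    obtain ⟨r', rfl⟩ := exists_add_of_le (Finsupp.single_le_iff.2 (Nat.one_le_of_lt hv'))
    have hsplit : ∀ r : σ →₀ ℕ, monomial (Finsupp.single v 1 + r) (1 : R) = X v * monomial r 1 :=
      fun r => by rw [X, monomial_mul, one_mul]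
    have hφ₂ : φ (monomial (Finsupp.single v 1 + r) 1) = φ (monomial m 1) := by
      rw [← sub_eq_zero, ← map_sub, ← neg_sub, map_neg, neg_eq_zero]
      exact hI hm₂
    rw [← hφ₂, hsplit, map_mul] at hne
    rw [← hφ₂, hsplit, hsplit, map_mul, map_mul] at heq
    have hr := ih (right_ne_zero_of_mul hne) (mul_left_cancel₀ (left_ne_zero_of_mul hne) heq)
      (by simp at hN; omega)
    have hsum : monomial m (1 : R) - monomial (Finsupp.single v 1 + r') 1 =
        (monomial m 1 - monomial (Finsupp.single v 1 + r) 1) +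
          X v * (monomial r 1 - monomial r' 1) := by
      rw [hsplit, hsplit]; ring
    rw [hsum]
    exact I.add_mem hm₂ (I.mul_mem_left _ hr)

end MvPolynomial

noncomputable section

namespace BlockMinors

variable {R ι κ L : Type*} [CommRing R] (β : κ → L) (S : Set κ)

/-- The blocks are the fibres of `β`. In the target, `.inl (b, i)` is the variable `y_{b,i}` and
`.inr j` is `z_j`. -/
def varExponent (v : ι × κ) : (L × ι) ⊕ κ →₀ ℕ :=
  Finsupp.single (.inl (β v.2, v.1)) 1 + Finsupp.single (.inr v.2) 1

def exponent : (ι × κ →₀ ℕ) →ₗ[ℕ] (L × ι) ⊕ κ →₀ ℕ :=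
  Finsupp.linearCombination ℕ (varExponent β)

variable (R) in
open scoped Classical in
def monomialMap : MvPolynomial (ι × κ) R →ₐ[R] MvPolynomial ((L × ι) ⊕ κ) R :=
  aeval fun v => if v.2 ∈ S then 0 else monomial (varExponent β v) 1

variable (R ι) in
def ideal : Ideal (MvPolynomial (ι × κ) R) :=
  Ideal.span
    ({f | ∃ i j, j ∈ S ∧ f = X (i, j)} ∪
      {f | ∃ i₁ i₂ c₁ c₂, i₁ ≠ i₂ ∧ c₁ ≠ c₂ ∧ c₁ ∉ S ∧ c₂ ∉ S ∧ β c₁ = β c₂ ∧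
        f = X (i₁, c₁) * X (i₂, c₂) - X (i₁, c₂) * X (i₂, c₁)})

variable {β S}

theorem exponent_apply (m : ι × κ →₀ ℕ) (x : (L × ι) ⊕ κ) :
    exponent β m x = ∑ v ∈ m.support, m v * varExponent β v x := by
  simp [exponent, Finsupp.linearCombination_apply, Finsupp.sum]

theorem exponent_inl_pos_iff {m : ι × κ →₀ ℕ} {b : L} {i : ι} :
    0 < exponent β m (.inl (b, i)) ↔ ∃ c, β c = b ∧ 0 < m (i, c) := by
  classical
  simp [exponent_apply, Finset.sum_pos_iff, varExponent, Finsupp.single_apply,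
    Nat.pos_iff_ne_zero, and_left_comm]

theorem exponent_inr_pos_iff {m : ι × κ →₀ ℕ} {c : κ} :
    0 < exponent β m (.inr c) ↔ ∃ i, 0 < m (i, c) := by
  classical
  simp [exponent_apply, Finset.sum_pos_iff, varExponent, Finsupp.single_apply,
    Nat.pos_iff_ne_zero]

theorem monomialMap_monomial_of_mem {m : ι × κ →₀ ℕ} {v : ι × κ} (hv : v ∈ m.support)
    (hS : v.2 ∈ S) : monomialMap R β S (monomial m 1) = 0 := by
  rw [monomialMap, aeval_monomial, map_one, one_mul]
  exact Finset.prod_eq_zero hv (by simp [hS, Finsupp.mem_support_iff.1 hv])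

theorem monomialMap_monomial {m : ι × κ →₀ ℕ} (hm : ∀ v ∈ m.support, v.2 ∉ S) :
    monomialMap R β S (monomial m 1) = monomial (exponent β m) 1 := by
  rw [monomialMap, aeval_monomial, map_one, one_mul, Finsupp.prod, exponent,
    Finsupp.linearCombination_apply, Finsupp.sum, monomial_sum_one]
  refine Finset.prod_congr rfl fun v hv => ?_
  rw [if_neg (hm v hv), monomial_pow, one_pow]

theorem monomialMap_monomial_eq_zero_iff [Nontrivial R] {m : ι × κ →₀ ℕ} :
    monomialMap R β S (monomial m 1) = 0 ↔ ∃ v ∈ m.support, v.2 ∈ S := by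
  refine ⟨fun h => ?_, fun ⟨v, hv, hS⟩ => monomialMap_monomial_of_mem hv hS⟩
  by_contra! hm
  simp [monomialMap_monomial hm] at h

theorem monomial_mem_ideal {m : ι × κ →₀ ℕ} {v : ι × κ} (hv : v ∈ m.support) (hS : v.2 ∈ S) :
    monomial m (1 : R) ∈ ideal R ι β S := by
  obtain ⟨r, rfl⟩ := exists_add_of_le
    (Finsupp.single_le_iff.2 (Nat.one_le_iff_ne_zero.2 (Finsupp.mem_support_iff.1 hv)))
  rw [← mul_one (1 : R), ← monomial_mul]
  exact Ideal.mul_mem_right _ _ (Ideal.subset_span (Or.inl ⟨v.1, v.2, hS, rfl⟩))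

theorem minor_mem_ideal {c₁ c₂ : κ} (hc₁ : c₁ ∉ S) (hc₂ : c₂ ∉ S) (hβ : β c₁ = β c₂)
    (i₁ i₂ : ι) :
    X (i₁, c₁) * X (i₂, c₂) - X (i₁, c₂) * X (i₂, c₁) ∈ ideal R ι β S := by
  rcases eq_or_ne i₁ i₂ with rfl | hi
  · simp [mul_comm]
  rcases eq_or_ne c₁ c₂ with rfl | hc
  · simp
  exact Ideal.subset_span (Or.inr ⟨i₁, i₂, c₁, c₂, hi, hc, hc₁, hc₂, hβ, rfl⟩)

theorem ideal_le_ker : ideal R ι β S ≤ RingHom.ker (monomialMap R β S) := by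
  have hX : ∀ {i : ι} {c : κ}, c ∉ S →
      monomialMap R β S (X (i, c)) = monomial (varExponent β (i, c)) 1 :=
    fun hc => by simp [monomialMap, hc]
  refine Ideal.span_le.2 ?_
  rintro f (⟨i, j, hj, rfl⟩ | ⟨i₁, i₂, c₁, c₂, -, -, hc₁, hc₂, hβ, rfl⟩)
  · simp [monomialMap, hj]
  · have hswap : varExponent β (i₁, c₁) + varExponent β (i₂, c₂) =
        varExponent β (i₁, c₂) + varExponent β (i₂, c₁) := by
      simp only [varExponent, hβ]; abel
    simp only [SetLike.mem_coe, RingHom.mem_ker, map_sub, map_mul, hX hc₁, hX hc₂, monomial_mul,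
      hswap, sub_self]

theorem exists_exchange [Nontrivial R] {m m' : ι × κ →₀ ℕ}
    (hne : monomialMap R β S (monomial m 1) ≠ 0)
    (heq : monomialMap R β S (monomial m 1) = monomialMap R β S (monomial m' 1)) (hm : m ≠ 0) :
    ∃ m₂, monomial m 1 - monomial m₂ 1 ∈ ideal R ι β S ∧ ∃ v, 0 < m₂ v ∧ 0 < m' v := by
  have hmS : ∀ v ∈ m.support, v.2 ∉ S := by
    simpa [monomialMap_monomial_eq_zero_iff] using hne
  have hm'S : ∀ v ∈ m'.support, v.2 ∉ S := by
    simpa [heq, monomialMap_monomial_eq_zero_iff] using hne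
  have hexp : exponent β m = exponent β m' := by
    rw [monomialMap_monomial hmS, monomialMap_monomial hm'S] at heq
    exact (monomial_left_inj one_ne_zero).1 heq
  obtain ⟨⟨i₁, c₁⟩, hv₁⟩ := Finsupp.support_nonempty_iff.2 hm
  have hpos₁ : 0 < m (i₁, c₁) := Nat.pos_of_ne_zero (Finsupp.mem_support_iff.1 hv₁)
  -- Row `i₁` of the block of `c₁` meets `m'` in some column `c₂`, which meets `m` in some row `i₂`.
  obtain ⟨c₂, hβ, hpos₂⟩ : ∃ c₂, β c₂ = β c₁ ∧ 0 < m' (i₁, c₂) := by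
    rw [← exponent_inl_pos_iff, ← hexp, exponent_inl_pos_iff]
    exact ⟨c₁, rfl, hpos₁⟩
  obtain ⟨i₂, hpos₃⟩ : ∃ i₂, 0 < m (i₂, c₂) := by
    rw [← exponent_inr_pos_iff, hexp, exponent_inr_pos_iff]
    exact ⟨i₁, hpos₂⟩
  rcases eq_or_ne c₁ c₂ with rfl | hc
  · exact ⟨m, by simp, (i₁, c₁), hpos₁, hpos₂⟩
  have hc₁ := hmS _ hv₁
  have hc₂ := hm'S _ (Finsupp.mem_support_iff.2 hpos₂.ne')
  obtain ⟨r₁, rfl⟩ := exists_add_of_le (Finsupp.single_le_iff.2 (Nat.one_le_of_lt hpos₁))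
  obtain ⟨r, rfl⟩ := exists_add_of_le (Finsupp.single_le_iff.2 (Nat.one_le_of_lt
    (show 0 < r₁ (i₂, c₂) by simpa [Finsupp.single_apply, hc] using hpos₃)))
  refine ⟨Finsupp.single (i₁, c₂) 1 + (Finsupp.single (i₂, c₁) 1 + r), ?_, (i₁, c₂), by simp,
    hpos₂⟩
  have hsplit : ∀ a b, monomial (Finsupp.single a 1 + (Finsupp.single b 1 + r)) (1 : R) =
      X a * X b * monomial r 1 :=
    fun a b => by simp only [X, monomial_mul, mul_one, add_assoc]
  rw [hsplit, hsplit, ← sub_mul]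
  exact Ideal.mul_mem_right _ _ (minor_mem_ideal hc₁ hc₂ hβ.symm i₁ i₂)

theorem ker_monomialMap [IsDomain R] : RingHom.ker (monomialMap R β S) = ideal R ι β S := by
  refine le_antisymm (ker_le_of_map_monomial _ (fun m => ?_) (fun m h => ?_)
    (fun m m' hne heq => ?_)) ideal_le_ker
  · by_cases hm : ∀ v ∈ m.support, v.2 ∉ S
    · exact Or.inr ⟨_, monomialMap_monomial hm⟩
    · push Not at hm
      exact Or.inl (monomialMap_monomial_eq_zero_iff.2 hm)
  · obtain ⟨v, hv, hS⟩ := monomialMap_monomial_eq_zero_iff.1 h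
    exact monomial_mem_ideal hv hS
  · exact monomial_sub_monomial_mem_of_exchange _ ideal_le_ker (fun _ _ => exists_exchange) hne heq

variable (R ι β S) in
theorem ideal_isPrime [IsDomain R] : (ideal R ι β S).IsPrime := by
  rw [← ker_monomialMap]
  exact RingHom.ker_isPrime _

end BlockMinors

variable {Λ κ : Type*} (C : Λ → Finset κ)

open scoped Classical in
def blockLabel (j : κ) : Λ ⊕ κ :=
  if h : ∃ b, j ∈ C b then .inl h.choose else .inr j

variable {C}

theorem blockLabel_of_mem (hC : Pairwise (Disjoint on C)) {j : κ} {b : Λ} (hj : j ∈ C b) :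
    blockLabel C j = .inl b := by
  have h : ∃ b, j ∈ C b := ⟨b, hj⟩
  rw [blockLabel, dif_pos h, Sum.inl.injEq]
  by_contra hne
  exact Finset.disjoint_left.1 (hC hne) h.choose_spec hj

theorem blockLabel_eq_blockLabel_iff (hC : Pairwise (Disjoint on C)) {c₁ c₂ : κ}
    (hc : c₁ ≠ c₂) : blockLabel C c₁ = blockLabel C c₂ ↔ ∃ b, c₁ ∈ C b ∧ c₂ ∈ C b := by
  refine ⟨fun h => ?_, fun ⟨b, h₁, h₂⟩ => by rw [blockLabel_of_mem hC h₁, blockLabel_of_mem hC h₂]⟩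
  unfold blockLabel at h
  split_ifs at h with h₁ h₂ h₂
  · exact ⟨_, h₁.choose_spec, (Sum.inl.inj h) ▸ h₂.choose_spec⟩
  all_goals simp_all

end

/-- Let `P` be a `d × n` matrix of indeterminates over a field `K`, with pairwise disjoint
column blocks `C 0, …, C (ℓ-1)`, and let `S` be a set of columns.  The ideal generated by
the variables `p i j` for `j ∈ S` together with all `2`-minors of the submatrices
`P_{C j \ S}` is prime. -/
theorem ideal_IS_isPrime (K : Type) [Field K] (d n ℓ : ℕ)
    (C : Fin ℓ → Finset (Fin n))
    (hdisj : ∀ j j', j ≠ j' → Disjoint (C j) (C j'))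
    (S : Finset (Fin n)) :
    (Ideal.span
      ({f : MvPolynomial (Fin d × Fin n) K | ∃ (i : Fin d) (j : Fin n), j ∈ S ∧ f = X (i, j)}
        ∪ {f : MvPolynomial (Fin d × Fin n) K |
            ∃ (j : Fin ℓ) (i₁ i₂ : Fin d) (c₁ c₂ : Fin n),
              i₁ ≠ i₂ ∧ c₁ ≠ c₂ ∧ c₁ ∈ C j \ S ∧ c₂ ∈ C j \ S ∧
              f = X (i₁, c₁) * X (i₂, c₂) - X (i₁, c₂) * X (i₂, c₁)})).IsPrime := by
  have hC : Pairwise (Disjoint on C) := fun j j' h => hdisj j j' h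
  convert BlockMinors.ideal_isPrime K (Fin d) (blockLabel C) (S : Set (Fin n)) using 1
  rw [BlockMinors.ideal]
  congr 2
  ext f
  constructor
  · rintro ⟨b, i₁, i₂, c₁, c₂, hi, hc, hc₁, hc₂, rfl⟩
    obtain ⟨h₁, hS₁⟩ := Finset.mem_sdiff.1 hc₁
    obtain ⟨h₂, hS₂⟩ := Finset.mem_sdiff.1 hc₂
    exact ⟨i₁, i₂, c₁, c₂, hi, hc, hS₁, hS₂,
      (blockLabel_eq_blockLabel_iff hC hc).2 ⟨b, h₁, h₂⟩, rfl⟩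
  · rintro ⟨i₁, i₂, c₁, c₂, hi, hc, hS₁, hS₂, hβ, rfl⟩
    obtain ⟨b, h₁, h₂⟩ := (blockLabel_eq_blockLabel_iff hC hc).1 hβ
    exact ⟨b, i₁, i₂, c₁, c₂, hi, hc, Finset.mem_sdiff.2 ⟨h₁, hS₁⟩, Finset.mem_sdiff.2 ⟨h₂, hS₂⟩,
      rfl⟩
end

section
/- Let P be a d × kℓ matrix of indeterminates with columns organized into an k × ℓ grid 𝒴, with columns C_1,…,C_ℓ (the columns of the grid). The ideal I_0 generated by all 2-minors [A|B] with B ⊆ C_j for some j, together with all ℓ-minors of P, is minimally generated by: all such 2-minors, and those ℓ-minors [A|B] with |B ∩ C_j| ≤ 1 for every j. -/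
open MvPolynomial

/-- The minor `[A|B]` of the `d × n` matrix of indeterminates `(p_{i,j})`,
with rows `A` and columns `B` taken in increasing order. -/
noncomputable def paperMinor (K : Type) [Field K] (d n m : ℕ)
    (A : Finset (Fin d)) (B : Finset (Fin n)) (hA : A.card = m) (hB : B.card = m) :
    MvPolynomial (Fin d × Fin n) K :=
  (Matrix.of fun a b : Fin m =>
    (X (A.orderEmbOfFin hA a, B.orderEmbOfFin hB b) : MvPolynomial (Fin d × Fin n) K)).det

/-- The set of `2`-minors `[A|B]` with both columns of `B` in the same grid-column `C j`
(the columns of the `d × kℓ` matrix are indexed by `Fin (k*ℓ)`, the cell `(i,j)` of the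
`k × ℓ` grid corresponding to the index `j*k + i`, so the grid-column of `c` is `c / k`). -/
def twoMinorsSet (K : Type) [Field K] (d k ℓ : ℕ) : Set (MvPolynomial (Fin d × Fin (k * ℓ)) K) :=
  {f | ∃ (A : Finset (Fin d)) (B : Finset (Fin (k * ℓ)))
        (hA : A.card = 2) (hB : B.card = 2) (j : Fin ℓ),
        (∀ c ∈ B, c.val / k = j.val) ∧ f = paperMinor K d (k * ℓ) 2 A B hA hB}

/-- All `ℓ`-minors of the full matrix `P`. -/
def fullEllMinorsSet (K : Type) [Field K] (d k ℓ : ℕ) :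
    Set (MvPolynomial (Fin d × Fin (k * ℓ)) K) :=
  {f | ∃ (A : Finset (Fin d)) (B : Finset (Fin (k * ℓ)))
        (hA : A.card = ℓ) (hB : B.card = ℓ), f = paperMinor K d (k * ℓ) ℓ A B hA hB}

/-- The `ℓ`-minors `[A|B]` with `|B ∩ C j| ≤ 1` for every grid-column `C j`. -/
def sparseEllMinorsSet (K : Type) [Field K] (d k ℓ : ℕ) :
    Set (MvPolynomial (Fin d × Fin (k * ℓ)) K) :=
  {f | ∃ (A : Finset (Fin d)) (B : Finset (Fin (k * ℓ)))
        (hA : A.card = ℓ) (hB : B.card = ℓ),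
        (∀ j : Fin ℓ, (B.filter (fun c => c.val / k = j.val)).card ≤ 1) ∧
        f = paperMinor K d (k * ℓ) ℓ A B hA hB}

/-!
Laplace expansion along a column outside a fixed pair `B₂ ⊆ B` writes `[A|B]` as a combination
of smaller minors whose columns still contain `B₂`; hence an `ℓ`-minor with two columns in one
grid-column `C j` lies in the ideal of the 2-minors on those two columns.

For minimality, the `K`-algebra map killing every variable outside the rows `A` and columns `B`
fixes `[A|B]` and kills every minor `[A'|B']` with `A' ⊄ A` or `B' ⊄ B`, which has a zero row or
column. Every generator other than `[A|B]` is such a minor: for minors of equal size because they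
are distinct, and between a 2-minor and a sparse `ℓ`-minor because a sparse column set contains no
two columns of one `C j` (when `ℓ = 2` the two sizes coincide). Since `[A|B] ≠ 0`, it cannot lie
in the ideal generated by the others.
-/

namespace PaperMinor

variable {K : Type} [Field K] {d n m : ℕ}

variable (K) in
noncomputable def minorMatrix (A : Finset (Fin d)) (B : Finset (Fin n)) (hA : A.card = m)
    (hB : B.card = m) : Matrix (Fin m) (Fin m) (MvPolynomial (Fin d × Fin n) K) :=
  Matrix.of fun a b => X (A.orderEmbOfFin hA a, B.orderEmbOfFin hB b)

theorem paperMinor_eq_det (A : Finset (Fin d)) (B : Finset (Fin n))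
    (hA : A.card = m) (hB : B.card = m) :
    paperMinor K d n m A B hA hB = (minorMatrix K A B hA hB).det :=
  rfl

theorem paperMinor_ne_zero (A : Finset (Fin d)) (B : Finset (Fin n))
    (hA : A.card = m) (hB : B.card = m) : paperMinor K d n m A B hA hB ≠ 0 := by
  have hrename : paperMinor K d n m A B hA hB =
      rename (Prod.map (A.orderEmbOfFin hA) (B.orderEmbOfFin hB))
        (Matrix.mvPolynomialX (Fin m) (Fin m) K).det := by
    rw [paperMinor_eq_det, AlgHom.map_det]
    congr 1
    ext a b
    simp [minorMatrix]
  rw [hrename, Ne, map_eq_zero_iff _ (rename_injective _ ?_)]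
  · exact Matrix.det_mvPolynomialX_ne_zero _ _
  · exact (A.orderEmbOfFin hA).injective.prodMap (B.orderEmbOfFin hB).injective

theorem orderEmbOfFin_erase {α : Type*} [LinearOrder α] {s : Finset α} (h : s.card = m + 1)
    (i : Fin (m + 1)) (h' : (s.erase (s.orderEmbOfFin h i)).card = m) :
    (s.erase (s.orderEmbOfFin h i)).orderEmbOfFin h' =
      (Fin.succAboveOrderEmb i).trans (s.orderEmbOfFin h) := by
  refine DFunLike.coe_injective (Finset.orderEmbOfFin_unique h' (fun x => ?_)
    ((s.orderEmbOfFin h).strictMono.comp (Fin.strictMono_succAbove i))).symm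
  simp [(s.orderEmbOfFin h).injective.eq_iff, Fin.succAbove_ne]

theorem minorMatrix_submatrix_succAbove (A : Finset (Fin d)) (B : Finset (Fin n))
    (hA : A.card = m + 1) (hB : B.card = m + 1) (i j : Fin (m + 1))
    (hA' : (A.erase (A.orderEmbOfFin hA i)).card = m)
    (hB' : (B.erase (B.orderEmbOfFin hB j)).card = m) :
    (minorMatrix K A B hA hB).submatrix i.succAbove j.succAbove =
      minorMatrix K _ _ hA' hB' := by
  ext a b
  simp [minorMatrix, orderEmbOfFin_erase]

theorem paperMinor_mem_span_twoMinors_of_subset {A : Finset (Fin d)} {B : Finset (Fin n)}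
    {hA : A.card = m} {hB : B.card = m} {B₂ : Finset (Fin n)} (hB₂ : B₂.card = 2)
    (hsub : B₂ ⊆ B) :
    paperMinor K d n m A B hA hB ∈ Ideal.span
      {f | ∃ (A₂ : Finset (Fin d)) (hA₂ : A₂.card = 2),
        f = paperMinor K d n 2 A₂ B₂ hA₂ hB₂} := by
  induction m generalizing A B with
  | zero => exact absurd (Finset.card_le_card hsub) (by omega)
  | succ m ih =>
    obtain hlt | heq := (hB₂ ▸ hB ▸ Finset.card_le_card hsub).lt_or_eq
    · obtain ⟨b, hbB, hbB₂⟩ :=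
        Finset.exists_mem_notMem_of_card_lt_card (hB₂ ▸ hB ▸ hlt)
      obtain ⟨j, rfl⟩ : b ∈ Set.range (B.orderEmbOfFin hB) := by
        rwa [Finset.range_orderEmbOfFin]
      have hB' : (B.erase (B.orderEmbOfFin hB j)).card = m := by simp [hB]
      rw [paperMinor_eq_det, Matrix.det_succ_column _ j]
      refine Ideal.sum_mem _ fun i _ => Ideal.mul_mem_left _ _ ?_
      have hA' : (A.erase (A.orderEmbOfFin hA i)).card = m := by simp [hA]
      rw [minorMatrix_submatrix_succAbove A B hA hB i j hA' hB', ← paperMinor_eq_det]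
      exact ih fun c hc => Finset.mem_erase.mpr ⟨fun h => hbB₂ (h ▸ hc), hsub hc⟩
    · obtain rfl : B₂ = B := Finset.eq_of_subset_of_card_le hsub (by omega)
      obtain rfl : m = 1 := by omega
      exact Ideal.subset_span ⟨A, hA, rfl⟩

noncomputable def killOutsideSubmatrix (A : Finset (Fin d)) (B : Finset (Fin n)) :
    MvPolynomial (Fin d × Fin n) K →ₐ[K] MvPolynomial (Fin d × Fin n) K :=
  aeval fun x => if x.1 ∈ A ∧ x.2 ∈ B then X x else 0

theorem killOutsideSubmatrix_paperMinor (A A' : Finset (Fin d)) (B B' : Finset (Fin n))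
    (hA' : A'.card = m) (hB' : B'.card = m) :
    killOutsideSubmatrix A B (paperMinor K d n m A' B' hA' hB') =
      if A' ⊆ A ∧ B' ⊆ B then paperMinor K d n m A' B' hA' hB' else 0 := by
  have hentry : ∀ a b, (killOutsideSubmatrix A B).mapMatrix (minorMatrix K A' B' hA' hB') a b =
      if A'.orderEmbOfFin hA' a ∈ A ∧ B'.orderEmbOfFin hB' b ∈ B then
        minorMatrix K A' B' hA' hB' a b else 0 := fun a b => by
    simp [killOutsideSubmatrix, minorMatrix]
  rw [paperMinor_eq_det, AlgHom.map_det]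
  split_ifs with h
  · congr 1
    ext a b
    simp [hentry, h.1 (Finset.orderEmbOfFin_mem _ _ a), h.2 (Finset.orderEmbOfFin_mem _ _ b)]
  · rcases not_and_or.mp h with hA | hB
    · obtain ⟨_, ha, haA⟩ := Finset.not_subset.mp hA
      obtain ⟨a, rfl⟩ : _ ∈ Set.range (A'.orderEmbOfFin hA') := by
        rwa [Finset.range_orderEmbOfFin]
      exact Matrix.det_eq_zero_of_row_eq_zero a fun b => by simp [hentry, haA]
    · obtain ⟨_, hb, hbB⟩ := Finset.not_subset.mp hB
      obtain ⟨b, rfl⟩ : _ ∈ Set.range (B'.orderEmbOfFin hB') := by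
        rwa [Finset.range_orderEmbOfFin]
      exact Matrix.det_eq_zero_of_column_eq_zero b fun a => by simp [hentry, hbB]

def IsMinorNotOfSubmatrix (A : Finset (Fin d)) (B : Finset (Fin n))
    (f : MvPolynomial (Fin d × Fin n) K) : Prop :=
  ∃ (m : ℕ) (A' : Finset (Fin d)) (B' : Finset (Fin n)) (hA' : A'.card = m) (hB' : B'.card = m),
    f = paperMinor K d n m A' B' hA' hB' ∧ ¬(A' ⊆ A ∧ B' ⊆ B)

theorem paperMinor_notMem_span {A : Finset (Fin d)} {B : Finset (Fin n)}
    (hA : A.card = m) (hB : B.card = m) {T : Set (MvPolynomial (Fin d × Fin n) K)}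
    (hT : ∀ f ∈ T, IsMinorNotOfSubmatrix A B f) :
    paperMinor K d n m A B hA hB ∉ Ideal.span T := by
  intro hmem
  have hkill : Ideal.map (killOutsideSubmatrix A B) (Ideal.span T) = ⊥ := by
    rw [Ideal.map_span, Ideal.span_eq_bot]
    rintro _ ⟨f, hf, rfl⟩
    obtain ⟨m', A', B', hA', hB', rfl, hnot⟩ := hT f hf
    rw [killOutsideSubmatrix_paperMinor, if_neg hnot]
  have := Ideal.mem_map_of_mem (killOutsideSubmatrix A B) hmem
  rw [hkill, Ideal.mem_bot, killOutsideSubmatrix_paperMinor,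
    if_pos ⟨subset_rfl, subset_rfl⟩] at this
  exact paperMinor_ne_zero A B hA hB this

theorem isMinorNotOfSubmatrix_of_ne {A A' : Finset (Fin d)} {B B' : Finset (Fin n)}
    (hA : A.card = m) (hB : B.card = m) (hA' : A'.card = m) (hB' : B'.card = m)
    (hne : paperMinor K d n m A' B' hA' hB' ≠ paperMinor K d n m A B hA hB) :
    IsMinorNotOfSubmatrix A B (paperMinor K d n m A' B' hA' hB') := by
  refine ⟨m, A', B', hA', hB', rfl, fun ⟨hAsub, hBsub⟩ => hne ?_⟩
  obtain rfl := Finset.eq_of_subset_of_card_le hAsub (by omega)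
  obtain rfl := Finset.eq_of_subset_of_card_le hBsub (by omega)
  rfl

end PaperMinor

open PaperMinor

section Grid

variable {K : Type} [Field K] {d k ℓ : ℕ}

theorem not_subset_of_card_filter_le_one {α : Type*} {p : α → Prop} [DecidablePred p]
    {B B' : Finset α} (hB : (B.filter p).card ≤ 1) (hB' : ∀ c ∈ B', p c)
    (h2 : 2 ≤ B'.card) :
    ¬B' ⊆ B := fun hsub =>
  absurd (Finset.card_le_card fun c hc => Finset.mem_filter.mpr ⟨hsub hc, hB' c hc⟩) (by omega)

theorem span_twoMinors_union_sparse_eq :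
    Ideal.span (twoMinorsSet K d k ℓ ∪ sparseEllMinorsSet K d k ℓ)
      = Ideal.span (twoMinorsSet K d k ℓ ∪ fullEllMinorsSet K d k ℓ) := by
  refine le_antisymm (Ideal.span_mono (Set.union_subset_union_right _ ?_)) ?_
  · rintro _ ⟨A, B, hA, hB, -, rfl⟩
    exact ⟨A, B, hA, hB, rfl⟩
  rw [Ideal.span_le]
  rintro _ (htwo | ⟨A, B, hA, hB, rfl⟩)
  · exact Ideal.subset_span (Or.inl htwo)
  by_cases hsparse : ∀ j : Fin ℓ, (B.filter (fun c => c.val / k = j.val)).card ≤ 1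
  · exact Ideal.subset_span (Or.inr ⟨A, B, hA, hB, hsparse, rfl⟩)
  obtain ⟨j, hj⟩ := not_forall.mp hsparse
  obtain ⟨B₂, hB₂sub, hB₂⟩ := Finset.exists_subset_card_eq (not_le.mp hj)
  refine Ideal.span_mono Set.subset_union_left (Ideal.span_le.mpr ?_
    (paperMinor_mem_span_twoMinors_of_subset hB₂ (hB₂sub.trans (Finset.filter_subset _ _))))
  rintro _ ⟨A₂, hA₂, rfl⟩
  exact Ideal.subset_span
    ⟨A₂, B₂, hA₂, hB₂, j, fun c hc => (Finset.mem_filter.mp (hB₂sub hc)).2, rfl⟩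

theorem isMinorNotOfSubmatrix_of_mem_twoMinorsSet (hℓ : 2 ≤ ℓ) {A : Finset (Fin d)}
    {B : Finset (Fin (k * ℓ))} (hA : A.card = 2) (hB : B.card = 2) {j : Fin ℓ}
    (hBj : ∀ c ∈ B, c.val / k = j.val) :
    ∀ f ∈ (twoMinorsSet K d k ℓ ∪ sparseEllMinorsSet K d k ℓ) \
      {paperMinor K d (k * ℓ) 2 A B hA hB}, IsMinorNotOfSubmatrix A B f := by
  rintro _ ⟨⟨A', B', hA', hB', -, -, rfl⟩ | ⟨A', B', hA', hB', hsparse, rfl⟩, hne⟩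
  · exact isMinorNotOfSubmatrix_of_ne hA hB hA' hB' hne
  refine ⟨ℓ, A', B', hA', hB', rfl, fun ⟨hAsub, hBsub⟩ => ?_⟩
  have hℓ2 : ℓ = 2 := le_antisymm (hA' ▸ hA ▸ Finset.card_le_card hAsub) hℓ
  have hBB' : B ⊆ B' := (Finset.eq_of_subset_of_card_le hBsub (by omega)).symm.subset
  exact not_subset_of_card_filter_le_one (hsparse j) hBj (by omega) hBB'

theorem isMinorNotOfSubmatrix_of_mem_sparseEllMinorsSet {A : Finset (Fin d)}
    {B : Finset (Fin (k * ℓ))} (hA : A.card = ℓ) (hB : B.card = ℓ)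
    (hsparse : ∀ j : Fin ℓ, (B.filter (fun c => c.val / k = j.val)).card ≤ 1) :
    ∀ f ∈ (twoMinorsSet K d k ℓ ∪ sparseEllMinorsSet K d k ℓ) \
      {paperMinor K d (k * ℓ) ℓ A B hA hB}, IsMinorNotOfSubmatrix A B f := by
  rintro _ ⟨⟨A', B', hA', hB', j, hB'j, rfl⟩ | ⟨A', B', hA', hB', -, rfl⟩, hne⟩
  · exact ⟨2, A', B', hA', hB', rfl,
      fun ⟨_, hBsub⟩ => not_subset_of_card_filter_le_one (hsparse j) hB'j hB'.ge hBsub⟩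
  · exact isMinorNotOfSubmatrix_of_ne hA hB hA' hB' hne

theorem notMem_span_diff_of_mem (hℓ : 2 ≤ ℓ) :
    ∀ g ∈ twoMinorsSet K d k ℓ ∪ sparseEllMinorsSet K d k ℓ,
      g ∉ Ideal.span ((twoMinorsSet K d k ℓ ∪ sparseEllMinorsSet K d k ℓ) \ {g}) := by
  rintro _ (⟨A, B, hA, hB, j, hBj, rfl⟩ | ⟨A, B, hA, hB, hsparse, rfl⟩)
  · exact paperMinor_notMem_span hA hB (isMinorNotOfSubmatrix_of_mem_twoMinorsSet hℓ hA hB hBj)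
  · exact paperMinor_notMem_span hA hB
      (isMinorNotOfSubmatrix_of_mem_sparseEllMinorsSet hA hB hsparse)

end Grid

theorem I0_minimally_generated_general (K : Type) [Field K] (d k ℓ : ℕ)
    (h2 : 2 ≤ k) (hkl : k ≤ ℓ) :
    Ideal.span (twoMinorsSet K d k ℓ ∪ sparseEllMinorsSet K d k ℓ)
      = Ideal.span (twoMinorsSet K d k ℓ ∪ fullEllMinorsSet K d k ℓ) ∧
    ∀ g ∈ twoMinorsSet K d k ℓ ∪ sparseEllMinorsSet K d k ℓ,
      g ∉ Ideal.span ((twoMinorsSet K d k ℓ ∪ sparseEllMinorsSet K d k ℓ) \ {g}) :=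
  ⟨span_twoMinors_union_sparse_eq, notMem_span_diff_of_mem (h2.trans hkl)⟩

/-- The ideal `I₀`, generated by all `2`-minors with columns inside a single grid-column
together with all `ℓ`-minors of `P`, is minimally generated by those `2`-minors together
with the `ℓ`-minors `[A|B]` satisfying `|B ∩ C j| ≤ 1` for every `j`. -/
theorem I0_minimally_generated (K : Type) [Field K] (d k ℓ : ℕ)
    (h2 : 2 ≤ k) (hkl : k ≤ ℓ) (hld : ℓ ≤ d) :
    Ideal.span (twoMinorsSet K d k ℓ ∪ sparseEllMinorsSet K d k ℓ)
      = Ideal.span (twoMinorsSet K d k ℓ ∪ fullEllMinorsSet K d k ℓ) ∧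
    ∀ g ∈ twoMinorsSet K d k ℓ ∪ sparseEllMinorsSet K d k ℓ,
      g ∉ Ideal.span ((twoMinorsSet K d k ℓ ∪ sparseEllMinorsSet K d k ℓ) \ {g}) :=
  I0_minimally_generated_general K d k ℓ h2 hkl
end

section
/- Let P be an n × (n+1) matrix over a commutative ring and a ∈ [n], b ∈ [n]. Then p_{b,a}·det(P delete column a) − p_{b,a+1}·det(P delete column a+1) = ∑_{i<b} (−1)^{a+i−1}[i,b|a,a+1]·det(P delete row i, columns a and a+1) + ∑_{i>b} (−1)^{a+i}[b,i|a,a+1]·det(P delete row i, columns a and a+1). -/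
/-!
Write the columns `a, a + 1` as `a.castSucc, a.succ` for `a : Fin (n + 1)`. After deleting one
of these two columns the other one sits at position `a`, and Laplace expansion along it expresses
both determinants through the same cofactors `M i = det(P del row i, cols a, a+1)`:
`det(P del a) = ∑ᵢ (-1)^(i+a) p_{i,a+1} M i` and `det(P del a+1) = ∑ᵢ (-1)^(i+a) p_{i,a} M i`.
The left-hand side is therefore `∑ᵢ (-1)^(a+i) [b,i|a,a+1] M i`; the term `i = b` vanishes and
for `i < b` the 2-minor changes sign when its rows are swapped.
-/

/-- The strictly increasing enumeration of the complement of a set `s` of indices,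
used to delete the rows/columns in `s` from a matrix (junk value if the sizes
do not match). -/
noncomputable def delEmb {N n : ℕ} [NeZero N] (s : Finset (Fin N)) : Fin n → Fin N :=
  if h : sᶜ.card = n then (fun x => sᶜ.orderEmbOfFin h x) else fun _ => 0

open Finset

lemma delEmb_eq_of_strictMono {N n : ℕ} [NeZero N] {s : Finset (Fin N)} (hs : sᶜ.card = n)
    {f : Fin n → Fin N} (hf : StrictMono f) (hfs : ∀ x, f x ∉ s) : delEmb s = f := by
  rw [delEmb, dif_pos hs]
  exact (orderEmbOfFin_unique hs (fun x => mem_compl.mpr (hfs x)) hf).symm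

lemma delEmb_singleton {N : ℕ} (a : Fin (N + 1)) :
    (delEmb {a} : Fin N → Fin (N + 1)) = a.succAbove :=
  delEmb_eq_of_strictMono (by simp [card_compl]) (Fin.strictMono_succAbove a)
    fun x => by simp [Fin.succAbove_ne]

section AdjacentPair

variable {N : ℕ} (a : Fin (N + 1))

lemma card_compl_castSucc_succ :
    ({a.castSucc, a.succ} : Finset (Fin (N + 2)))ᶜ.card = N := by
  rw [card_compl, card_pair (Fin.castSucc_lt_succ (i := a)).ne]
  simp

lemma delEmb_castSucc_succ_eq_castSucc_succAbove_comp :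
    (delEmb {a.castSucc, a.succ} : Fin N → Fin (N + 2)) = a.castSucc.succAbove ∘ a.succAbove :=
  delEmb_eq_of_strictMono (card_compl_castSucc_succ a)
    ((Fin.strictMono_succAbove _).comp (Fin.strictMono_succAbove a)) fun x => by
      rw [Function.comp_apply, mem_insert, mem_singleton, ← Fin.succAbove_castSucc_self,
        Fin.succAbove_right_injective.eq_iff]
      exact not_or_intro (Fin.succAbove_ne _ _) (Fin.succAbove_ne _ _)

lemma delEmb_castSucc_succ_eq_succ_succAbove_comp :
    (delEmb {a.castSucc, a.succ} : Fin N → Fin (N + 2)) = a.succ.succAbove ∘ a.succAbove :=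
  delEmb_eq_of_strictMono (card_compl_castSucc_succ a)
    ((Fin.strictMono_succAbove _).comp (Fin.strictMono_succAbove a)) fun x => by
      rw [Function.comp_apply, mem_insert, mem_singleton, ← Fin.succAbove_succ_self,
        Fin.succAbove_right_injective.eq_iff]
      exact not_or_intro (Fin.succAbove_ne _ _) (Fin.succAbove_ne _ _)

end AdjacentPair

lemma det_submatrix_succAbove_eq_sum {R : Type*} [CommRing R] {n : ℕ}
    (P : Matrix (Fin (n + 1)) (Fin (n + 2)) R) (c : Fin (n + 2)) (j : Fin (n + 1)) :
    (P.submatrix id c.succAbove).det = ∑ i, (-1 : R) ^ (i.val + j.val) * P i (c.succAbove j) *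
      (P.submatrix i.succAbove (c.succAbove ∘ j.succAbove)).det :=
  Matrix.det_succ_column _ j

lemma sum_eq_sum_filter_lt_add_sum_filter_gt {ι M : Type*} [Fintype ι] [LinearOrder ι]
    [AddCommMonoid M] (f : ι → M) (b : ι) (hb : f b = 0) :
    ∑ i, f i = ∑ i ∈ univ.filter (· < b), f i + ∑ i ∈ univ.filter (b < ·), f i := by
  rw [← sum_filter_add_sum_filter_not univ (· < b)]
  congr 1
  refine (sum_subset (fun i hi => ?_) fun i hi hnot => ?_).symm
  · simp only [mem_filter, mem_univ, true_and, not_lt] at hi ⊢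
    exact hi.le
  · simp only [mem_filter, mem_univ, true_and, not_lt] at hi hnot
    rw [le_antisymm hnot hi, hb]

lemma det_two_column_identity_castSucc_succ {R : Type*} [CommRing R] {n : ℕ}
    (P : Matrix (Fin (n + 1)) (Fin (n + 2)) R) (a b : Fin (n + 1)) :
    let M : Fin (n + 1) → R := fun i =>
      (P.submatrix i.succAbove (a.castSucc.succAbove ∘ a.succAbove)).det
    P b a.castSucc * (P.submatrix id a.castSucc.succAbove).det
      - P b a.succ * (P.submatrix id a.succ.succAbove).det
    = ∑ i ∈ univ.filter (· < b),
        (-1 : R) ^ (a.val + i.val + 1) * (P i a.castSucc * P b a.succ - P i a.succ * P b a.castSucc)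
          * M i
      + ∑ i ∈ univ.filter (b < ·),
        (-1 : R) ^ (a.val + i.val) * (P b a.castSucc * P i a.succ - P b a.succ * P i a.castSucc)
          * M i := by
  intro M
  have hcomp : a.succ.succAbove ∘ a.succAbove = a.castSucc.succAbove ∘ a.succAbove :=
    (delEmb_castSucc_succ_eq_succ_succAbove_comp a).symm.trans
      (delEmb_castSucc_succ_eq_castSucc_succAbove_comp a)
  have hdel_castSucc : (P.submatrix id a.castSucc.succAbove).det
      = ∑ i, (-1 : R) ^ (i.val + a.val) * P i a.succ * M i := by
    rw [det_submatrix_succAbove_eq_sum P a.castSucc a, Fin.succAbove_castSucc_self]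
  have hdel_succ : (P.submatrix id a.succ.succAbove).det
      = ∑ i, (-1 : R) ^ (i.val + a.val) * P i a.castSucc * M i := by
    rw [det_submatrix_succAbove_eq_sum P a.succ a, Fin.succAbove_succ_self, hcomp]
  rw [hdel_castSucc, hdel_succ, mul_sum, mul_sum, ← sum_sub_distrib,
    sum_eq_sum_filter_lt_add_sum_filter_gt _ b (by ring)]
  congr 1 <;> refine sum_congr rfl fun i _ => by ring

/-- Identity (2): for an `(n+1) × (n+2)` matrix `P` over a commutative ring, a row `b` and
columns `a, a+1`,
`p_{b,a}·det(P del col a) − p_{b,a+1}·det(P del col a+1)`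
equals
`∑_{i<b} (−1)^{a+i−1}[i,b|a,a+1]·det(P del row i, cols a,a+1)
  + ∑_{i>b} (−1)^{a+i}[b,i|a,a+1]·det(P del row i, cols a,a+1)`
(sign exponents written in terms of the `0`-based indices `a.val`, `i.val`). -/
theorem det_two_column_identity_rect (R : Type) [CommRing R] (n : ℕ)
    (P : Matrix (Fin (n + 1)) (Fin (n + 2)) R)
    (a : Fin (n + 2)) (b : Fin (n + 1)) (ha : a.val + 1 < n + 2) :
    P b a * (P.submatrix id (delEmb {a} : Fin (n + 1) → Fin (n + 2))).det
      - P b ⟨a.val + 1, ha⟩ *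
        (P.submatrix id (delEmb {⟨a.val + 1, ha⟩} : Fin (n + 1) → Fin (n + 2))).det
    = (∑ i ∈ Finset.univ.filter (fun i : Fin (n + 1) => i < b),
        (-1 : R) ^ (a.val + i.val + 1)
          * (P i a * P b ⟨a.val + 1, ha⟩ - P i ⟨a.val + 1, ha⟩ * P b a)
          * (P.submatrix (delEmb {i} : Fin n → Fin (n + 1))
              (delEmb {a, ⟨a.val + 1, ha⟩} : Fin n → Fin (n + 2))).det)
      + ∑ i ∈ Finset.univ.filter (fun i : Fin (n + 1) => b < i),
        (-1 : R) ^ (a.val + i.val)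
          * (P b a * P i ⟨a.val + 1, ha⟩ - P b ⟨a.val + 1, ha⟩ * P i a)
          * (P.submatrix (delEmb {i} : Fin n → Fin (n + 1))
              (delEmb {a, ⟨a.val + 1, ha⟩} : Fin n → Fin (n + 2))).det := by
  obtain ⟨a', rfl⟩ : ∃ a' : Fin (n + 1), a'.castSucc = a := ⟨⟨a.val, by omega⟩, rfl⟩
  rw [show (⟨a'.castSucc.val + 1, ha⟩ : Fin (n + 2)) = a'.succ from rfl]
  simp only [delEmb_singleton, delEmb_castSucc_succ_eq_castSucc_succAbove_comp a']
  exact det_two_column_identity_castSucc_succ P a' b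
end

section
/- For S ∈ ℒ, the ideals I_S and I_0 are incomparable: I_S ⊄ I_0 and I_0 ⊄ I_S. Moreover, for distinct S, T ∈ ℒ, I_S ⊄ I_T. -/
open MvPolynomial

/-- The set of (determinants of) `2`-minors of the submatrices `P_{C_j}` of the `d × kℓ`
matrix of indeterminates `P`, whose columns are the cells of a `k × ℓ` grid; `C j` is the
`j`-th grid-column, consisting of the cells `(i, j)` for `i : Fin k`. -/
def colTwoMinors (K : Type) [Field K] (d k ℓ : ℕ) :
    Set (MvPolynomial (Fin d × (Fin k × Fin ℓ)) K) :=
  {f | ∃ (r₁ r₂ : Fin d) (j : Fin ℓ) (i₁ i₂ : Fin k), r₁ ≠ r₂ ∧ i₁ ≠ i₂ ∧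
    f = X (r₁, (i₁, j)) * X (r₂, (i₂, j)) - X (r₁, (i₂, j)) * X (r₂, (i₁, j))}

/-- The set of `ℓ`-minors of the submatrices `P_{R_i}`, where `R i` is the `i`-th grid-row,
consisting of the cells `(i, j)` for `j : Fin ℓ`. -/
def rowEllMinors (K : Type) [Field K] (d k ℓ : ℕ) :
    Set (MvPolynomial (Fin d × (Fin k × Fin ℓ)) K) :=
  {f | ∃ (i : Fin k) (r : Fin ℓ → Fin d), Function.Injective r ∧
    f = (Matrix.of fun x y : Fin ℓ =>
      (X (r x, (i, y)) : MvPolynomial (Fin d × (Fin k × Fin ℓ)) K)).det}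

/-- The set of all `ℓ`-minors of the full matrix `P`. -/
def fullEllMinors (K : Type) [Field K] (d k ℓ : ℕ) :
    Set (MvPolynomial (Fin d × (Fin k × Fin ℓ)) K) :=
  {f | ∃ (r : Fin ℓ → Fin d) (c : Fin ℓ → Fin k × Fin ℓ),
    Function.Injective r ∧ Function.Injective c ∧
    f = (Matrix.of fun x y : Fin ℓ =>
      (X (r x, c y) : MvPolynomial (Fin d × (Fin k × Fin ℓ)) K)).det}

/-- The determinantal hyperedge ideal `J = J_{[d],Δ^{2,ℓ}}`, generated by all `2`-minors of
the `P_{C_j}` and all `ℓ`-minors of the `P_{R_i}`. -/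
noncomputable def idealJ (K : Type) [Field K] (d k ℓ : ℕ) : Ideal (MvPolynomial (Fin d × (Fin k × Fin ℓ)) K) :=
  Ideal.span (colTwoMinors K d k ℓ ∪ rowEllMinors K d k ℓ)

/-- The ideal `I₀`, generated by all `2`-minors of the `P_{C_j}` and all `ℓ`-minors of `P`. -/
noncomputable def idealI0 (K : Type) [Field K] (d k ℓ : ℕ) : Ideal (MvPolynomial (Fin d × (Fin k × Fin ℓ)) K) :=
  Ideal.span (colTwoMinors K d k ℓ ∪ fullEllMinors K d k ℓ)

/-- The ideal `I_S`, generated by the variables `p_{r,c}` with `c ∈ S` together with all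
`2`-minors of the `P_{C_j}`. -/
noncomputable def idealIS (K : Type) [Field K] (d k ℓ : ℕ) (S : Finset (Fin k × Fin ℓ)) :
    Ideal (MvPolynomial (Fin d × (Fin k × Fin ℓ)) K) :=
  Ideal.span ({f | ∃ (r : Fin d) (c : Fin k × Fin ℓ), c ∈ S ∧ f = X (r, c)}
    ∪ colTwoMinors K d k ℓ)

/-- The family `ℒ` of transversals of the grid-rows of the `k × ℓ` grid which meet at least
two grid-columns. -/
def familyL (k ℓ : ℕ) : Set (Finset (Fin k × Fin ℓ)) :=
  {S | S.card = k ∧ (S.image Prod.fst).card = k ∧ 2 ≤ (S.image Prod.snd).card}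

/-!
Each non-inclusion `I ⊄ J` is witnessed by a point of `K^{d × kℓ}` at which every generator
of `J` vanishes but some element of `I` does not. At a point whose value at `p_{r,c}` depends
only on `c`, every column `2`-minor vanishes, and so does every `ℓ`-minor of `P` (its rows are
equal). The all-ones point then separates a variable of `I_S` from `I₀`, and the indicator of
the complement of `T` separates a variable `p_{r,c}` with `c ∈ S \ T` from `I_T`.
-/

section

variable {K : Type} [Field K] {d k ℓ : ℕ}

lemma eval_det_of_X {σ m : Type*} [Fintype m] [DecidableEq m] (pt : σ → K) (f : m → m → σ) :
    eval pt (Matrix.of fun x y => (X (f x y) : MvPolynomial σ K)).det =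
      (Matrix.of fun x y => pt (f x y)).det := by
  rw [RingHom.map_det]
  congr 1
  ext x y
  simp

lemma eval_colTwoMinors_of_cellwise (v : Fin k × Fin ℓ → K) :
    ∀ g ∈ colTwoMinors K d k ℓ, eval (fun p => v p.2) g = 0 := by
  rintro g ⟨r₁, r₂, j, i₁, i₂, -, -, rfl⟩
  simp only [map_sub, map_mul, eval_X]
  ring

lemma eval_fullEllMinors_of_cellwise (hℓ : 1 < ℓ) (v : Fin k × Fin ℓ → K) :
    ∀ g ∈ fullEllMinors K d k ℓ, eval (fun p => v p.2) g = 0 := by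
  rintro g ⟨r, c, -, -, rfl⟩
  rw [eval_det_of_X]
  exact Matrix.det_zero_of_row_eq (i := ⟨0, by omega⟩) (j := ⟨1, hℓ⟩) (by simp) rfl

lemma eval_colTwoMinors_of_single (a : Fin ℓ → Fin k) (pt : Fin d × (Fin k × Fin ℓ) → K)
    (hpt : ∀ r i j, i ≠ a j → pt (r, (i, j)) = 0) :
    ∀ g ∈ colTwoMinors K d k ℓ, eval pt g = 0 := by
  rintro g ⟨r₁, r₂, j, i₁, i₂, -, hi, rfl⟩
  simp only [map_sub, map_mul, eval_X]
  by_cases h₁ : i₁ = a j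
  · rw [hpt r₂ i₂ j (h₁ ▸ hi.symm), hpt r₁ i₂ j (h₁ ▸ hi.symm)]
    ring
  · rw [hpt r₁ i₁ j h₁, hpt r₂ i₁ j h₁]
    ring

lemma idealI0_le_ker_eval_cellwise (hℓ : 1 < ℓ) (v : Fin k × Fin ℓ → K) :
    idealI0 K d k ℓ ≤ RingHom.ker (eval fun p => v p.2) := by
  rw [idealI0, Ideal.span_le]
  rintro g (hg | hg)
  · exact eval_colTwoMinors_of_cellwise v g hg
  · exact eval_fullEllMinors_of_cellwise hℓ v g hg

lemma idealIS_le_ker_eval {S : Finset (Fin k × Fin ℓ)} (pt : Fin d × (Fin k × Fin ℓ) → K)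
    (hS : ∀ r, ∀ c ∈ S, pt (r, c) = 0) (hcol : ∀ g ∈ colTwoMinors K d k ℓ, eval pt g = 0) :
    idealIS K d k ℓ S ≤ RingHom.ker (eval pt) := by
  rw [idealIS, Ideal.span_le]
  rintro g (⟨r, c, hc, rfl⟩ | hg)
  · simpa using hS r c hc
  · exact hcol g hg

lemma X_mem_idealIS {S : Finset (Fin k × Fin ℓ)} (r : Fin d) {c : Fin k × Fin ℓ} (hc : c ∈ S) :
    X (r, c) ∈ idealIS K d k ℓ S :=
  Ideal.subset_span (Or.inl ⟨r, c, hc, rfl⟩)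

lemma one_lt_of_mem_familyL {S : Finset (Fin k × Fin ℓ)} (hS : S ∈ familyL k ℓ) :
    1 < ℓ :=
  calc 1 < (S.image Prod.snd).card := hS.2.2
    _ ≤ ℓ := (Finset.card_le_univ _).trans_eq (Fintype.card_fin ℓ)

lemma nonempty_of_mem_familyL {S : Finset (Fin k × Fin ℓ)} (hS : S ∈ familyL k ℓ) :
    S.Nonempty :=
  Finset.image_nonempty.mp (Finset.card_pos.mp (two_pos.trans_le hS.2.2))

/-- Otherwise `S` contains a whole grid-column (`k` cells) and a cell of a second one. -/
lemma exists_not_mem_gridCol {S : Finset (Fin k × Fin ℓ)} (hS : S ∈ familyL k ℓ)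
    (j : Fin ℓ) : ∃ i, (i, j) ∉ S := by
  by_contra! hcol
  obtain ⟨c, hc, hcj⟩ := Finset.exists_mem_ne hS.2.2 j
  obtain ⟨p, hp, rfl⟩ := Finset.mem_image.mp hc
  have hsub : (Finset.univ ×ˢ {j} : Finset (Fin k × Fin ℓ)) ⊂ S := by
    refine (Finset.ssubset_iff_of_subset fun q hq => ?_).mpr ⟨p, hp, fun hpj => hcj ?_⟩
    · rw [Finset.mem_product, Finset.mem_singleton] at hq
      simpa [← hq.2] using hcol q.1
    · exact Finset.mem_singleton.mp (Finset.mem_product.mp hpj).2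
  simpa [hS.1] using Finset.card_lt_card hsub

lemma idealIS_not_le_idealI0 (hd : 0 < d) (hℓ : 1 < ℓ) {S : Finset (Fin k × Fin ℓ)}
    (hS : S.Nonempty) : ¬ idealIS K d k ℓ S ≤ idealI0 K d k ℓ := by
  obtain ⟨c, hc⟩ := hS
  intro hle
  have hzero := idealI0_le_ker_eval_cellwise hℓ (fun _ => (1 : K))
    (hle (X_mem_idealIS ⟨0, hd⟩ hc))
  simp at hzero

/-- In each grid-column `j` pick a cell `(a j, j)` outside `S`. The `ℓ`-minor of `P` on these
cells and the first `ℓ` rows lies in `I₀`, but evaluates to `det 1` at the point which is `1`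
exactly at the diagonal entries of that minor; that point kills the generators of `I_S`. -/
lemma idealI0_not_le_idealIS (hld : ℓ ≤ d) {S : Finset (Fin k × Fin ℓ)}
    (hS : S ∈ familyL k ℓ) : ¬ idealI0 K d k ℓ ≤ idealIS K d k ℓ S := by
  choose a ha using exists_not_mem_gridCol hS
  let pt : Fin d × (Fin k × Fin ℓ) → K := fun p =>
    if p.2.1 = a p.2.2 ∧ p.1 = Fin.castLE hld p.2.2 then 1 else 0
  have hminor : (Matrix.of fun x y : Fin ℓ =>
      (X (Fin.castLE hld x, (a y, y)) : MvPolynomial _ K)).det ∈ idealI0 K d k ℓ :=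
    Ideal.subset_span (Or.inr
      ⟨_, _, Fin.castLE_injective hld, fun y y' h => congrArg Prod.snd h, rfl⟩)
  have hpt_S : ∀ r, ∀ c ∈ S, pt (r, c) = 0 := by
    rintro r ⟨i, j⟩ hc
    refine if_neg fun h => ha j ?_
    rwa [← h.1]
  have hpt_col : ∀ r i j, i ≠ a j → pt (r, (i, j)) = 0 :=
    fun r i j hi => if_neg fun h => hi h.1
  have hpt_minor : (Matrix.of fun x y : Fin ℓ => pt (Fin.castLE hld x, (a y, y))) = 1 := by
    ext x y
    simp [pt, Matrix.one_apply]
  intro hle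
  have hzero := idealIS_le_ker_eval pt hpt_S (eval_colTwoMinors_of_single a pt hpt_col)
    (hle hminor)
  simp [eval_det_of_X, hpt_minor] at hzero

lemma idealIS_not_le_of_not_subset (hd : 0 < d) {S T : Finset (Fin k × Fin ℓ)}
    (hST : ¬ S ⊆ T) : ¬ idealIS K d k ℓ S ≤ idealIS K d k ℓ T := by
  obtain ⟨c, hcS, hcT⟩ := Finset.not_subset.mp hST
  intro hle
  let v : Fin k × Fin ℓ → K := fun c => if c ∈ T then 0 else 1
  have hzero := idealIS_le_ker_eval (fun p => v p.2) (fun _ c hc => if_pos hc)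
    (eval_colTwoMinors_of_cellwise v) (hle (X_mem_idealIS ⟨0, hd⟩ hcS))
  simp [v, hcT] at hzero

end

theorem ideals_incomparable_general (K : Type) [Field K] (d k ℓ : ℕ)
    (hld : ℓ ≤ d) :
    (∀ S ∈ familyL k ℓ,
        ¬ idealIS K d k ℓ S ≤ idealI0 K d k ℓ ∧ ¬ idealI0 K d k ℓ ≤ idealIS K d k ℓ S) ∧
    (∀ S ∈ familyL k ℓ, ∀ T ∈ familyL k ℓ, S ≠ T →
        ¬ idealIS K d k ℓ S ≤ idealIS K d k ℓ T) := by
  refine ⟨fun S hS => ⟨?_, idealI0_not_le_idealIS hld hS⟩, fun S hS T hT hST => ?_⟩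
  · have hd : 0 < d := by have := one_lt_of_mem_familyL hS; omega
    exact idealIS_not_le_idealI0 hd (one_lt_of_mem_familyL hS) (nonempty_of_mem_familyL hS)
  · have hd : 0 < d := by have := one_lt_of_mem_familyL hS; omega
    refine idealIS_not_le_of_not_subset hd fun hsub => hST ?_
    exact Finset.eq_of_subset_of_card_le hsub (hS.1.trans hT.1.symm).ge

/-- For `S ∈ ℒ` the ideals `I_S` and `I₀` are incomparable, and for distinct `S, T ∈ ℒ`
one has `I_S ⊄ I_T`. -/
theorem ideals_incomparable (K : Type) [Field K] (d k ℓ : ℕ)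
    (h2 : 2 ≤ k) (hkl : k ≤ ℓ) (hld : ℓ ≤ d) :
    (∀ S ∈ familyL k ℓ,
        ¬ idealIS K d k ℓ S ≤ idealI0 K d k ℓ ∧ ¬ idealI0 K d k ℓ ≤ idealIS K d k ℓ S) ∧
    (∀ S ∈ familyL k ℓ, ∀ T ∈ familyL k ℓ, S ≠ T →
        ¬ idealIS K d k ℓ S ≤ idealIS K d k ℓ T) :=
  ideals_incomparable_general K d k ℓ hld
end
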